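/- arXiv:1105.0859 — 2 statements merged into one kernel-verified Lean document; each statement's English description precedes it below -/
import Mathlib

section
/- For all x in (0, π/2], the chain of inequalities 1/π ≤ sin x/(2x) ≤ (1 - cos x)/x² ≤ sin(x/2)/x ≤ 1/2 ≤ tan(x/2)/x ≤ 2/π holds. -/
/-!
Writing `t = x / 2`, the half-angle formulas `sin x = 2 sin t cos t` and `1 - cos x = 2 sin² t`
reduce the middle inequalities to `t cos t ≤ sin t ≤ t`, i.e. to `sin t ≤ t ≤ tan t`. The outer
bounds are Jordan's inequality `2x/π ≤ sin x` and the convexity of `tan` on `[0, π/2)`: the secant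
slope `tan t / t` is monotone, and it equals `4/π` at `t = π/4`.
-/

open Real Set

namespace Real

lemma sin_eq_two_mul_sin_half_mul_cos_half (x : ℝ) : sin x = 2 * sin (x / 2) * cos (x / 2) := by
  rw [← sin_two_mul, mul_div_cancel₀ x two_ne_zero]

lemma one_sub_cos_eq_two_mul_sin_half_sq (x : ℝ) : 1 - cos x = 2 * sin (x / 2) ^ 2 := by
  conv_lhs => rw [← mul_div_cancel₀ x two_ne_zero, cos_two_mul, cos_sq']
  ring

lemma convexOn_tan_Ico : ConvexOn ℝ (Ico 0 (π / 2)) tan := by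
  have cos_pos_of_mem {y : ℝ} (hy : y ∈ Ico 0 (π / 2)) : 0 < cos y :=
    cos_pos_of_mem_Ioo ⟨by linarith [hy.1, pi_pos], hy.2⟩
  refine MonotoneOn.convexOn_of_deriv (convex_Ico _ _)
    (continuousOn_tan.mono fun y hy => (cos_pos_of_mem hy).ne') ?_ ?_
  · intro y hy
    rw [interior_Ico] at hy
    exact (differentiableAt_tan.2 (cos_pos_of_mem (Ioo_subset_Ico_self hy)).ne')
      |>.differentiableWithinAt
  · rw [interior_Ico]
    intro a ha b hb hab
    simp only [deriv_tan]
    have hcos : cos b ≤ cos a :=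
      cos_le_cos_of_nonneg_of_le_pi ha.1.le (by linarith [hb.2, pi_pos]) hab
    have hb₀ : 0 < cos b := cos_pos_of_mem (Ioo_subset_Ico_self hb)
    gcongr

lemma tan_div_le_tan_div {x y : ℝ} (hx : 0 < x) (hxy : x ≤ y) (hy : y < π / 2) :
    tan x / x ≤ tan y / y := by
  have h := convexOn_tan_Ico.secant_mono (a := 0) ⟨le_rfl, pi_div_two_pos⟩
    ⟨hx.le, hxy.trans_lt hy⟩ ⟨hx.le.trans hxy, hy⟩ hx.ne' (hx.trans_le hxy).ne' hxy
  simpa only [tan_zero, sub_zero] using h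

lemma one_div_pi_le_sin_div_two_mul {x : ℝ} (hx : 0 < x) (hxπ : x ≤ π / 2) :
    1 / π ≤ sin x / (2 * x) := by
  have h := mul_le_sin hx.le hxπ
  rw [div_mul_eq_mul_div, div_le_iff₀ pi_pos] at h
  rw [div_le_div_iff₀ pi_pos (by positivity)]
  linarith

lemma sin_div_two_mul_le_one_sub_cos_div_sq {x : ℝ} (hx : 0 < x) (hxπ : x < π) :
    sin x / (2 * x) ≤ (1 - cos x) / x ^ 2 := by
  have hs : 0 ≤ sin (x / 2) := sin_nonneg_of_nonneg_of_le_pi (by linarith) (by linarith)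
  have hc : 0 < cos (x / 2) := cos_pos_of_mem_Ioo ⟨by linarith, by linarith⟩
  have htan : x / 2 * cos (x / 2) ≤ sin (x / 2) := by
    have := le_tan (x := x / 2) (by linarith) (by linarith)
    rwa [tan_eq_sin_div_cos, le_div_iff₀ hc] at this
  rw [sin_eq_two_mul_sin_half_mul_cos_half, one_sub_cos_eq_two_mul_sin_half_sq,
    div_le_div_iff₀ (by positivity) (by positivity)]
  nlinarith [mul_le_mul_of_nonneg_left htan (by positivity : 0 ≤ sin (x / 2) * x)]

lemma one_sub_cos_div_sq_le_sin_half_div {x : ℝ} (hx : 0 < x) (hx2π : x ≤ 2 * π) :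
    (1 - cos x) / x ^ 2 ≤ sin (x / 2) / x := by
  have hs : 0 ≤ sin (x / 2) := sin_nonneg_of_nonneg_of_le_pi (by linarith) (by linarith)
  have hsin : sin (x / 2) ≤ x / 2 := sin_le (by linarith)
  rw [one_sub_cos_eq_two_mul_sin_half_sq, div_le_div_iff₀ (by positivity) hx]
  nlinarith [mul_le_mul_of_nonneg_left hsin (by positivity : 0 ≤ sin (x / 2) * x)]

lemma sin_half_div_le_one_half {x : ℝ} (hx : 0 < x) : sin (x / 2) / x ≤ 1 / 2 := by
  rw [div_le_div_iff₀ hx two_pos]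
  linarith [sin_le (x := x / 2) (by linarith)]

lemma one_half_le_tan_half_div {x : ℝ} (hx : 0 < x) (hxπ : x < π) : 1 / 2 ≤ tan (x / 2) / x := by
  rw [div_le_div_iff₀ two_pos hx]
  linarith [le_tan (x := x / 2) (by linarith) (by linarith)]

lemma tan_half_div_le_two_div_pi {x : ℝ} (hx : 0 < x) (hxπ : x ≤ π / 2) :
    tan (x / 2) / x ≤ 2 / π := by
  have h := tan_div_le_tan_div (x := x / 2) (y := π / 4) (by linarith) (by linarith)
    (by linarith [pi_pos])
  rw [tan_pi_div_four] at h
  calc tan (x / 2) / x = tan (x / 2) / (x / 2) / 2 := by field_simp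
    _ ≤ 1 / (π / 4) / 2 := by gcongr
    _ = 2 / π := by field_simp; norm_num

end Real

theorem stmt2 (x : ℝ) (hx : 0 < x) (hx2 : x ≤ π/2) :
    1/π ≤ Real.sin x/(2*x) ∧ Real.sin x/(2*x) ≤ (1 - Real.cos x)/x^2 ∧
    (1 - Real.cos x)/x^2 ≤ Real.sin (x/2)/x ∧ Real.sin (x/2)/x ≤ 1/2 ∧
    (1:ℝ)/2 ≤ Real.tan (x/2)/x ∧ Real.tan (x/2)/x ≤ 2/π := by
  have hπ : x < π := by linarith [pi_pos]
  exact ⟨one_div_pi_le_sin_div_two_mul hx hx2, sin_div_two_mul_le_one_sub_cos_div_sq hx hπ,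
    one_sub_cos_div_sq_le_sin_half_div hx (by linarith), sin_half_div_le_one_half hx,
    one_half_le_tan_half_div hx hπ, tan_half_div_le_two_div_pi hx hx2⟩
end

section
/- For all x in (0, π/2), sinh(x)/x < 3/(2 + cos x) < (2 + cosh x)/3. -/
/-!
After clearing denominators, each inequality says that an entire function vanishing at `0`
is positive on `(0, π/2)`. Differentiating two times (first inequality) or three times
(second inequality) reduces them to `tanh x < sin x` and
`sin x (cosh x - 1) < sinh x (1 - cos x)`. With `x = 2t`, the half-angle formulas factor both
differences into products of `sin t cosh t - cos t sinh t > 0` (as `tanh t < t < tan t`) with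
positive terms.
-/

open Real Set

lemma lt_of_hasDerivAt_pos {f f' : ℝ → ℝ} {a b : ℝ} (hab : a < b)
    (hf : ∀ y ∈ Icc a b, HasDerivAt f (f' y) y) (hf' : ∀ y ∈ Ioo a b, 0 < f' y) :
    f a < f b := by
  obtain ⟨c, hc, hslope⟩ := exists_hasDerivAt_eq_slope f f' hab
    (fun y hy => (hf y hy).continuousAt.continuousWithinAt)
    (fun y hy => hf y (Ioo_subset_Icc_self hy))
  have hpos := hf' c hc
  rwa [hslope, div_pos_iff_of_pos_right (sub_pos.2 hab), sub_pos] at hpos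

lemma sinh_lt_mul_cosh {t : ℝ} (ht : 0 < t) : sinh t < t * cosh t := by
  have key := lt_of_hasDerivAt_pos (f := fun y => y * cosh y - sinh y)
    (f' := fun y => y * sinh y) ht
    (fun y _ => (((hasDerivAt_id y).mul (hasDerivAt_cosh y)).sub
      (hasDerivAt_sinh y)).congr_deriv (by simp))
    (fun y hy => mul_pos hy.1 (sinh_pos_iff.2 hy.1))
  simp only [zero_mul, sinh_zero, sub_zero] at key
  linarith

lemma cos_mul_sinh_lt_sin_mul_cosh {t : ℝ} (ht : 0 < t) (ht' : t < π / 2) :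
    cos t * sinh t < sin t * cosh t := by
  have hcos : 0 < cos t := cos_pos_of_mem_Ioo ⟨by linarith [pi_pos], ht'⟩
  have hcos_mul : t * cos t < sin t := by
    have htan := lt_tan ht ht'
    rwa [tan_eq_sin_div_cos, lt_div_iff₀ hcos] at htan
  calc cos t * sinh t < cos t * (t * cosh t) := by gcongr; exact sinh_lt_mul_cosh ht
    _ = t * cos t * cosh t := by ring
    _ < sin t * cosh t := by gcongr

lemma sin_mul_sinh_lt_cos_mul_cosh {t : ℝ} (ht : 0 < t) (ht' : t < π / 4) :
    sin t * sinh t < cos t * cosh t := by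
  have hsin_lt_cos : sin t < cos t := by
    rw [← cos_pi_div_two_sub]
    exact cos_lt_cos_of_nonneg_of_le_pi_div_two ht.le (by linarith) (by linarith)
  have hcos : 0 < cos t := cos_pos_of_mem_Ioo ⟨by linarith [pi_pos], by linarith⟩
  have hsinh : 0 < sinh t := sinh_pos_iff.2 ht
  calc sin t * sinh t < cos t * sinh t := by gcongr
    _ < cos t * cosh t := by gcongr; exact sinh_lt_cosh t

lemma sinh_lt_sin_mul_cosh {x : ℝ} (hx : 0 < x) (hx' : x < π / 2) :
    sinh x < sin x * cosh x := by
  obtain ⟨t, rfl⟩ : ∃ t, x = 2 * t := ⟨x / 2, by ring⟩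
  have h₁ := sub_pos.2 (cos_mul_sinh_lt_sin_mul_cosh (t := t) (by linarith) (by linarith))
  have h₂ := sub_pos.2 (sin_mul_sinh_lt_cos_mul_cosh (t := t) (by linarith) (by linarith))
  rw [sin_two_mul, sinh_two_mul, cosh_two_mul, ← sub_pos]
  calc 0 < 2 * ((sin t * cosh t - cos t * sinh t) * (cos t * cosh t - sin t * sinh t)) :=
        mul_pos two_pos (mul_pos h₁ h₂)
    _ = _ := by linear_combination (-2 * sinh t * cosh t) * sin_sq_add_cos_sq t

lemma sin_mul_cosh_sub_one_lt_sinh_mul_one_sub_cos {x : ℝ} (hx : 0 < x) (hx' : x < π / 2) :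
    sin x * (cosh x - 1) < sinh x * (1 - cos x) := by
  obtain ⟨t, rfl⟩ : ∃ t, x = 2 * t := ⟨x / 2, by ring⟩
  have h := sub_pos.2 (cos_mul_sinh_lt_sin_mul_cosh (t := t) (by linarith) (by linarith))
  have hsin : 0 < sin t := sin_pos_of_pos_of_lt_pi (by linarith) (by linarith [pi_pos])
  have hsinh : 0 < sinh t := sinh_pos_iff.2 (by linarith)
  rw [sin_two_mul, sinh_two_mul, cosh_two_mul, cos_two_mul_eq_one_sub, ← sub_pos]
  calc 0 < 4 * sin t * sinh t * (sin t * cosh t - cos t * sinh t) := by positivity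
    _ = _ := by linear_combination (2 * sin t * cos t) * cosh_sq' t

section
variable {x : ℝ} (hx : 0 < x) (hx' : x < π / 2)
include hx hx'

lemma cosh_mul_two_add_cos_lt : cosh x * (2 + cos x) < 3 + sinh x * sin x := by
  have key := lt_of_hasDerivAt_pos (f := fun y => 3 + sinh y * sin y - cosh y * (2 + cos y))
    (f' := fun y => 2 * (sin y * cosh y - sinh y)) hx
    (fun y _ => (((hasDerivAt_const y 3).add ((hasDerivAt_sinh y).mul (hasDerivAt_sin y))).sub
      ((hasDerivAt_cosh y).mul ((hasDerivAt_cos y).const_add 2))).congr_deriv (by ring))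
    (fun y hy => by linarith [sinh_lt_sin_mul_cosh hy.1 (hy.2.trans hx')])
  norm_num at key
  linarith

lemma sinh_mul_two_add_cos_lt : sinh x * (2 + cos x) < 3 * x := by
  have key := lt_of_hasDerivAt_pos (f := fun y => 3 * y - sinh y * (2 + cos y))
    (f' := fun y => 3 + sinh y * sin y - cosh y * (2 + cos y)) hx
    (fun y _ => (((hasDerivAt_id y).const_mul 3).sub
      ((hasDerivAt_sinh y).mul ((hasDerivAt_cos y).const_add 2))).congr_deriv (by ring))
    (fun y hy => by linarith [cosh_mul_two_add_cos_lt hy.1 (hy.2.trans hx')])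
  norm_num at key
  linarith

lemma cos_add_sinh_mul_sin_lt_cosh : cos x + sinh x * sin x < cosh x := by
  have key := lt_of_hasDerivAt_pos (f := fun y => cosh y - cos y - sinh y * sin y)
    (f' := fun y => sinh y * (1 - cos y) - sin y * (cosh y - 1)) hx
    (fun y _ => (((hasDerivAt_cosh y).sub (hasDerivAt_cos y)).sub
      ((hasDerivAt_sinh y).mul (hasDerivAt_sin y))).congr_deriv (by ring))
    (fun y hy => by
      linarith [sin_mul_cosh_sub_one_lt_sinh_mul_one_sub_cos hy.1 (hy.2.trans hx')])
  norm_num at key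
  linarith

lemma sin_mul_two_add_cosh_lt : sin x * (2 + cosh x) < sinh x * (2 + cos x) := by
  have key := lt_of_hasDerivAt_pos (f := fun y => sinh y * (2 + cos y) - sin y * (2 + cosh y))
    (f' := fun y => 2 * (cosh y - cos y - sinh y * sin y)) hx
    (fun y _ => (((hasDerivAt_sinh y).mul ((hasDerivAt_cos y).const_add 2)).sub
      ((hasDerivAt_sin y).mul ((hasDerivAt_cosh y).const_add 2))).congr_deriv (by ring))
    (fun y hy => by linarith [cos_add_sinh_mul_sin_lt_cosh hy.1 (hy.2.trans hx')])
  norm_num at key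
  linarith

lemma nine_lt_two_add_cos_mul_two_add_cosh : 9 < (2 + cos x) * (2 + cosh x) := by
  have key := lt_of_hasDerivAt_pos (f := fun y => (2 + cos y) * (2 + cosh y))
    (f' := fun y => sinh y * (2 + cos y) - sin y * (2 + cosh y)) hx
    (fun y _ => (((hasDerivAt_cos y).const_add 2).mul
      ((hasDerivAt_cosh y).const_add 2)).congr_deriv (by ring))
    (fun y hy => by linarith [sin_mul_two_add_cosh_lt hy.1 (hy.2.trans hx')])
  norm_num at key
  linarith

end

theorem stmt8 (x : ℝ) (hx : 0 < x) (hx2 : x < π/2) :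
    Real.sinh x/x < 3/(2 + Real.cos x) ∧ 3/(2 + Real.cos x) < (2 + Real.cosh x)/3 := by
  have hcos : 0 < 2 + cos x := by linarith [neg_one_le_cos x]
  constructor
  · rw [div_lt_div_iff₀ hx hcos]
    linarith [sinh_mul_two_add_cos_lt hx hx2]
  · rw [div_lt_div_iff₀ hcos three_pos]
    linarith [nine_lt_two_add_cos_mul_two_add_cosh hx hx2]
end
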